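/- arXiv:2512.02211 — 8 statements merged into one kernel-verified Lean document; each statement's English description precedes it below -/
import Mathlib

section
/- Let G be a finite group and a, b elements of G not in the center Z(G). Then a commutes with b if and only if the center of the centralizer of a, i.e. Z(C_G(a)), is contained in C_G(b). -/
variable {G : Type*} [Group G] [Fintype G]

/-- The centralizer of an element `g` of `G`. -/
def centG (g : G) : Subgroup G := Subgroup.centralizer ({g} : Set G)

/-- `Z(g) = Z(C_G(g))`, the center of the centralizer of `g`, as a subgroup of `G`. -/
def zCent (g : G) : Subgroup G :=
  (Subgroup.center ↥(Subgroup.centralizer ({g} : Set G))).map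
    (Subgroup.centralizer ({g} : Set G)).subtype

theorem stmt_0 (a b : G) (ha : a ∉ Subgroup.center G) (hb : b ∉ Subgroup.center G) :
    Commute a b ↔ zCent a ≤ centG b := by
  constructor
  · intro h x hx
    obtain ⟨⟨x, hxc⟩, hxz, rfl⟩ := hx
    have hbc : b ∈ Subgroup.centralizer ({a} : Set G) := by
      intro g hg
      simp only [Set.mem_singleton_iff] at hg
      subst hg
      exact h
    intro g hg
    simp only [Set.mem_singleton_iff] at hg
    rw [hg]
    exact congrArg Subtype.val (Subgroup.mem_center_iff.mp hxz ⟨b, hbc⟩)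
  · intro h
    have hac : a ∈ Subgroup.centralizer ({a} : Set G) := by
      intro g hg
      simp only [Set.mem_singleton_iff] at hg
      subst hg; rfl
    have haz : a ∈ zCent a := by
      refine ⟨⟨a, hac⟩, Subgroup.mem_center_iff.mpr ?_, rfl⟩
      rintro ⟨g, hg⟩
      have := hg a rfl
      ext
      simpa using this.symm
    have := h haz
    have hba := this b rfl
    exact hba.symm
end

section
/- Let G be a finite group and a, b elements of G not in the center Z(G). Then Z(C_G(a)) ≤ C_G(b) if and only if Z(C_G(b)) ≤ C_G(a). -/
variable {G : Type*} [Group G] [Fintype G]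

lemma self_mem_zCent (a : G) : a ∈ zCent a := by
  refine Subgroup.mem_map.mpr ⟨⟨a, Subgroup.mem_centralizer_singleton_iff.mpr rfl⟩, ?_, rfl⟩
  rw [Subgroup.mem_center_iff]
  intro g
  ext
  exact Subgroup.mem_centralizer_singleton_iff.mp g.2

lemma zCent_le_centG_aux (a b : G) (h : zCent a ≤ centG b) : zCent b ≤ centG a := by
  have hab : a ∈ Subgroup.centralizer ({b} : Set G) := h (self_mem_zCent a)
  intro z hz
  obtain ⟨⟨z, hzm⟩, hzc, rfl⟩ := Subgroup.mem_map.mp hz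
  have := Subgroup.mem_center_iff.mp hzc ⟨a, hab⟩
  exact Subgroup.mem_centralizer_singleton_iff.mpr (congrArg Subtype.val this).symm

theorem stmt_1 (a b : G) (ha : a ∉ Subgroup.center G) (hb : b ∉ Subgroup.center G) :
    zCent a ≤ centG b ↔ zCent b ≤ centG a :=
  ⟨zCent_le_centG_aux a b, zCent_le_centG_aux b a⟩
end

section
/- Let G be a finite group and g, h elements of G not in Z(G). Then C_G(g) ≤ C_G(h) if and only if Z(C_G(h)) ≤ Z(C_G(g)). -/
variable {G : Type*} [Group G] [Fintype G]

theorem stmt_4 (g h : G) (hg : g ∉ Subgroup.center G) (hh : h ∉ Subgroup.center G) :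
    centG g ≤ centG h ↔ zCent h ≤ zCent g := by
  constructor
  · intro hle x hx
    obtain ⟨y, hy, rfl⟩ := hx
    rw [SetLike.mem_coe, Subgroup.mem_center_iff] at hy
    have hgc : g ∈ Subgroup.centralizer ({g} : Set G) := by
      rw [Subgroup.mem_centralizer_iff]; intro m hm; simp_all
    have hycg : (y : G) ∈ Subgroup.centralizer ({g} : Set G) := by
      rw [Subgroup.mem_centralizer_iff]
      intro m hm
      obtain rfl : g = m := hm.symm
      have := hy ⟨g, hle hgc⟩
      exact congrArg Subtype.val this
    refine ⟨⟨(y : G), hycg⟩, ?_, rfl⟩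
    rw [SetLike.mem_coe, Subgroup.mem_center_iff]
    intro z
    have := hy ⟨(z : G), hle z.2⟩
    have := congrArg Subtype.val this
    exact Subtype.ext this
  · intro hz x hx
    have hhc : h ∈ Subgroup.centralizer ({h} : Set G) := by
      rw [Subgroup.mem_centralizer_iff]; intro m hm; simp_all
    have hmem : h ∈ zCent h := by
      refine ⟨⟨h, hhc⟩, ?_, rfl⟩
      rw [SetLike.mem_coe, Subgroup.mem_center_iff]
      intro z
      refine Subtype.ext ?_
      have := z.2
      rw [Subgroup.mem_centralizer_iff] at this
      simpa using (this h rfl).symm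
    obtain ⟨y, hy, hyv⟩ := hz hmem
    rw [SetLike.mem_coe, Subgroup.mem_center_iff] at hy
    rw [centG, Subgroup.mem_centralizer_iff]
    intro m hm
    obtain rfl : h = m := hm.symm
    have := hy ⟨x, hx⟩
    have := congrArg Subtype.val this
    simp only [Subgroup.coe_mul, Subgroup.coe_subtype] at this
    have hyv' : (y : G) = h := hyv
    rw [hyv'] at this
    exact this.symm
end

section
/- Let G be a finite nonabelian group. The minimal elements (under inclusion) of the set {C_G(g) : g ∈ G \ Z(G)} form a cover of G: every element of G lies in some centralizer of a noncentral element which is minimal among such centralizers. -/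
variable {G : Type*} [Group G] [Fintype G]

omit [Fintype G] in
lemma mem_centG_iff (x g : G) : x ∈ centG g ↔ g * x = x * g := by
  simp [centG, Subgroup.mem_centralizer_iff]

open Classical in
theorem stmt_7 (hna : ∃ a b : G, a * b ≠ b * a) (x : G) :
    ∃ g : G, g ∉ Subgroup.center G ∧
      (∀ h : G, h ∉ Subgroup.center G → centG h ≤ centG g → centG h = centG g) ∧
      x ∈ centG g := by
  obtain ⟨a, b, hab⟩ := hna
  have ha : a ∉ Subgroup.center G := fun h => hab ((Subgroup.mem_center_iff.mp h b).symm)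
  -- start element: x if noncentral, else a
  by_cases hx : x ∈ Subgroup.center G
  case pos =>
    -- x is central: x lies in every centralizer; minimize over all noncentral h ≤ centG a
    obtain ⟨g, hgmem, hgmin⟩ := (Finset.univ.filter
        (fun h : G => h ∉ Subgroup.center G ∧ centG h ≤ centG a)).exists_min_image
        (fun h => Nat.card (centG h)) ⟨a, by simp [ha]⟩
    simp only [Finset.mem_filter, Finset.mem_univ, true_and] at hgmem hgmin
    refine ⟨g, hgmem.1, ?_, ?_⟩
    · intro h hh hle
      exact Subgroup.eq_of_le_of_card_ge hle (hgmin h ⟨hh, hle.trans hgmem.2⟩)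
    · exact (mem_centG_iff x g).mpr (Subgroup.mem_center_iff.mp hx g)
  case neg =>
    obtain ⟨g, hgmem, hgmin⟩ := (Finset.univ.filter
        (fun h : G => h ∉ Subgroup.center G ∧ centG h ≤ centG x)).exists_min_image
        (fun h => Nat.card (centG h)) ⟨x, by simp [hx]⟩
    simp only [Finset.mem_filter, Finset.mem_univ, true_and] at hgmem hgmin
    refine ⟨g, hgmem.1, ?_, ?_⟩
    · intro h hh hle
      exact Subgroup.eq_of_le_of_card_ge hle (hgmin h ⟨hh, hle.trans hgmem.2⟩)
    · have : g ∈ centG x := hgmem.2 ((mem_centG_iff g g).mpr rfl)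
      rw [mem_centG_iff] at this ⊢
      exact this.symm
end

section
/- Let G be a finite nonabelian group and let 𝔠 be a set of centralizers of noncentral elements of G. Then the union of the subgroups in 𝔠 is all of G if and only if for every x ∈ G \ Z(G), the subgroup Z(C_G(x)) is contained in some member of 𝔠. -/
variable {G : Type*} [Group G] [Fintype G]

theorem stmt_8 (hna : ∃ a b : G, a * b ≠ b * a) (𝔠 : Set (Subgroup G))
    (h𝔠 : ∀ H ∈ 𝔠, ∃ g : G, g ∉ Subgroup.center G ∧ H = centG g) :
    (∀ x : G, ∃ H ∈ 𝔠, x ∈ H) ↔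
      (∀ x : G, x ∉ Subgroup.center G → ∃ H ∈ 𝔠, zCent x ≤ H) := by
  constructor
  · intro hcov x hx
    obtain ⟨H, hH, hxH⟩ := hcov x
    refine ⟨H, hH, ?_⟩
    obtain ⟨g, hg, rfl⟩ := h𝔠 H hH
    rw [centG, Subgroup.mem_centralizer_iff] at hxH
    -- g ∈ C_G(x) since x ∈ C_G(g)
    have hgx : g ∈ Subgroup.centralizer ({x} : Set G) := by
      rw [Subgroup.mem_centralizer_iff]
      intro a ha
      simp only [Set.mem_singleton_iff] at ha
      subst ha
      exact (hxH g (Set.mem_singleton g)).symm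
    rintro z ⟨⟨y, hy⟩, hyc, rfl⟩
    simp only [SetLike.mem_coe, Subgroup.mem_center_iff] at hyc
    have := hyc ⟨g, hgx⟩
    rw [centG, Subgroup.mem_centralizer_iff]
    intro a ha
    simp only [Set.mem_singleton_iff] at ha
    subst ha
    exact congrArg Subtype.val this
  · intro hcov x
    by_cases hx : x ∈ Subgroup.center G
    · obtain ⟨a, b, hab⟩ := hna
      have ha : a ∉ Subgroup.center G := by
        intro h
        exact hab ((Subgroup.mem_center_iff.mp h b).symm)
      obtain ⟨H, hH, _⟩ := hcov a ha
      obtain ⟨g, hg, hHg⟩ := h𝔠 H hH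
      refine ⟨H, hH, ?_⟩
      rw [hHg, centG, Subgroup.mem_centralizer_iff]
      intro c _
      exact Subgroup.mem_center_iff.mp hx c
    · obtain ⟨H, hH, hle⟩ := hcov x hx
      refine ⟨H, hH, hle ?_⟩
      have hxc : x ∈ Subgroup.centralizer ({x} : Set G) := by
        rw [Subgroup.mem_centralizer_iff]
        intro a ha
        simp only [Set.mem_singleton_iff] at ha
        subst ha; rfl
      refine ⟨⟨x, hxc⟩, ?_, rfl⟩
      simp only [SetLike.mem_coe, Subgroup.mem_center_iff]
      rintro ⟨b, hb⟩
      rw [Subgroup.mem_centralizer_iff] at hb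
      ext
      show b * x = x * b
      exact (hb x (Set.mem_singleton x)).symm
end

section
/- Let G be a finite nonabelian group and g, h ∈ G \ Z(G). Then the following are equivalent: (1) h ∈ Z(C_G(g)); (2) Z(C_G(h)) ≤ Z(C_G(g)); (3) C_G(g) ≤ C_G(h). -/
variable {G : Type*} [Group G] [Fintype G]

lemma self_mem_centG (g : G) : g ∈ centG g := by
  simp [centG, Subgroup.mem_centralizer_iff]

lemma mem_zCent_iff (g x : G) : x ∈ zCent g ↔ ∀ z ∈ centG g, z * x = x * z := by
  constructor
  · rintro ⟨y, hy, rfl⟩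
    intro z hz
    exact congrArg Subtype.val (Subgroup.mem_center_iff.mp hy ⟨z, hz⟩)
  · intro hx
    have hxg : x ∈ centG g := by
      simpa [centG, Subgroup.mem_centralizer_iff] using hx g (self_mem_centG g)
    exact ⟨⟨x, hxg⟩, Subgroup.mem_center_iff.mpr (fun z => Subtype.ext (hx z z.2)), rfl⟩

theorem stmt_10 (hna : ∃ a b : G, a * b ≠ b * a) (g h : G)
    (hg : g ∉ Subgroup.center G) (hh : h ∉ Subgroup.center G) :
    List.TFAE [h ∈ zCent g, zCent h ≤ zCent g, centG g ≤ centG h] := by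
  tfae_have 1 → 3 := by
    intro h1 z hz
    simp only [centG, Subgroup.mem_centralizer_iff, Set.mem_singleton_iff,
      forall_eq]
    exact ((mem_zCent_iff g h).mp h1 z hz).symm
  tfae_have 3 → 2 := by
    intro h3 x hx
    rw [mem_zCent_iff] at hx ⊢
    intro z hz
    exact hx z (h3 hz)
  tfae_have 2 → 1 := by
    intro h2
    refine h2 ((mem_zCent_iff h h).mpr ?_)
    intro z hz
    exact ((by simpa [centG, Subgroup.mem_centralizer_iff] using hz : h * z = z * h)).symm
  tfae_finish
end

section
/- Let G be a finite nonabelian group and g ∈ G \ Z(G). If Z(C_G(g)) is maximal under inclusion in 𝒵(G) = {Z(C_G(x)) : x ∈ G \ Z(G)}, then Z(C_G(g)) is the only member of 𝒵(G) containing the set Z*(g) = {h ∈ G \ Z(G) : C_G(h) = C_G(g)}. -/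
variable {G : Type*} [Group G] [Fintype G]

lemma zCent_le_of_mem {g x : G} (hgx : g ∈ zCent x) : zCent g ≤ zCent x := by
  rw [zCent, Subgroup.mem_map] at hgx
  obtain ⟨⟨g0, hg0⟩, hcen, hEq⟩ := hgx
  simp only [Subgroup.coe_subtype] at hEq
  subst hEq
  -- centralizer {x} ≤ centralizer {g0}
  have hCle : Subgroup.centralizer ({x} : Set G) ≤ Subgroup.centralizer ({g0} : Set G) := by
    intro c hc
    rw [Subgroup.mem_centralizer_iff]
    rintro a rfl
    have := Subgroup.mem_center_iff.mp hcen ⟨c, hc⟩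
    exact congrArg Subtype.val this.symm
  intro z hz
  rw [zCent, Subgroup.mem_map] at hz ⊢
  obtain ⟨⟨z0, hz0⟩, hzcen, hzEq⟩ := hz
  simp only [Subgroup.coe_subtype] at hzEq
  subst hzEq
  have hxg0 : x ∈ Subgroup.centralizer ({g0} : Set G) :=
    hCle (Subgroup.mem_centralizer_iff.mpr (by rintro a rfl; rfl))
  have hzx : z0 ∈ Subgroup.centralizer ({x} : Set G) := by
    rw [Subgroup.mem_centralizer_iff]
    have hcomm := Subgroup.mem_center_iff.mp hzcen ⟨x, hxg0⟩
    intro a ha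
    rw [Set.mem_singleton_iff] at ha
    rw [ha]
    simpa using (congrArg Subtype.val hcomm)
  refine ⟨⟨z0, hzx⟩, Subgroup.mem_center_iff.mpr ?_, rfl⟩
  rintro ⟨c, hc⟩
  have := Subgroup.mem_center_iff.mp hzcen ⟨c, hCle hc⟩
  have hG : c * z0 = z0 * c := by simpa using congrArg Subtype.val this
  exact Subtype.ext hG

theorem stmt_11 (hna : ∃ a b : G, a * b ≠ b * a) (g : G) (hg : g ∉ Subgroup.center G)
    (hmax : ∀ x : G, x ∉ Subgroup.center G → zCent g ≤ zCent x → zCent g = zCent x) :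
    ∀ x : G, x ∉ Subgroup.center G →
      {h : G | h ∉ Subgroup.center G ∧ centG h = centG g} ⊆ (zCent x : Set G) →
      zCent x = zCent g := by
  intro x hx hsub
  have hgmem : g ∈ zCent x := hsub ⟨hg, rfl⟩
  exact (hmax x hx (zCent_le_of_mem hgmem)).symm
end

section
/- Let G be a finite group. The following are equivalent: (1) for all x, y ∈ G \ Z(G), C_G(x) ≤ C_G(y) implies C_G(x) = C_G(y) (G is an F-group); (2) for all a, b ∈ G \ Z(G), b ∈ Z(C_G(a)) implies Z(C_G(a)) = Z(C_G(b)); (3) for all a, b ∈ G \ Z(G), either Z(C_G(a)) = Z(C_G(b)) or Z(C_G(a)) ∩ Z(C_G(b)) = Z(G); (4) for all a, b ∈ G \ Z(G), Z(C_G(b)) ≤ Z(C_G(a)) implies Z(C_G(a)) = Z(C_G(b)). -/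
variable {G : Type*} [Group G] [Fintype G]

lemma mem_centG {g h : G} : h ∈ centG g ↔ g * h = h * g := by
  simp [centG, Subgroup.mem_centralizer_iff]

lemma mem_zCent {a g : G} : g ∈ zCent a ↔ centG a ≤ centG g := by
  constructor
  · rintro ⟨⟨c, hc⟩, hcen, rfl⟩ h hh
    rw [SetLike.mem_coe, Subgroup.mem_center_iff] at hcen
    have := hcen ⟨h, hh⟩
    rw [Subtype.ext_iff] at this
    exact mem_centG.2 this.symm
  · intro hle
    have ha : a ∈ centG a := mem_centG.2 rfl
    have hga : g ∈ centG a := by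
      have := mem_centG.1 (hle ha)
      exact mem_centG.2 this.symm
    refine ⟨⟨g, hga⟩, ?_, rfl⟩
    rw [SetLike.mem_coe, Subgroup.mem_center_iff]
    rintro ⟨h, hh⟩
    exact Subtype.ext (mem_centG.1 (hle hh)).symm

lemma zCent_anti {x y : G} (h : centG x ≤ centG y) : zCent y ≤ zCent x := by
  intro g hg
  exact mem_zCent.2 (h.trans (mem_zCent.1 hg))

lemma center_le_zCent (a : G) : Subgroup.center G ≤ zCent a := by
  intro z hz
  refine mem_zCent.2 fun h _ => mem_centG.2 ?_
  exact (Subgroup.mem_center_iff.1 hz h).symm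

lemma zCent_congr {a b : G} (h : centG a = centG b) : zCent a = zCent b := by
  ext g; rw [mem_zCent, mem_zCent, h]

theorem stmt_14 :
    List.TFAE [
      ∀ x y : G, x ∉ Subgroup.center G → y ∉ Subgroup.center G →
        centG x ≤ centG y → centG x = centG y,
      ∀ a b : G, a ∉ Subgroup.center G → b ∉ Subgroup.center G →
        b ∈ zCent a → zCent a = zCent b,
      ∀ a b : G, a ∉ Subgroup.center G → b ∉ Subgroup.center G →
        zCent a = zCent b ∨ zCent a ⊓ zCent b = Subgroup.center G,
      ∀ a b : G, a ∉ Subgroup.center G → b ∉ Subgroup.center G →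
        zCent b ≤ zCent a → zCent a = zCent b] := by
  tfae_have 1 → 2
  | h1, a, b, ha, hb, hab => zCent_congr (h1 a b ha hb (mem_zCent.1 hab))
  tfae_have 2 → 3
  | h2, a, b, ha, hb => by
    by_cases hmeet : zCent a ⊓ zCent b = Subgroup.center G
    · exact Or.inr hmeet
    · left
      have hle : Subgroup.center G ≤ zCent a ⊓ zCent b :=
        le_inf (center_le_zCent a) (center_le_zCent b)
      obtain ⟨c, hc, hcz⟩ : ∃ c, c ∈ zCent a ⊓ zCent b ∧ c ∉ Subgroup.center G := by
        by_contra hcon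
        push_neg at hcon
        exact hmeet (le_antisymm hcon hle)
      obtain ⟨hca, hcb⟩ := Subgroup.mem_inf.1 hc
      exact (h2 a c ha hcz hca).trans (h2 b c hb hcz hcb).symm
  tfae_have 3 → 4
  | h3, a, b, ha, hb, hle => by
    rcases h3 a b ha hb with h | h
    · exact h
    · exact absurd (h ▸ Subgroup.mem_inf.2 ⟨hle (self_mem_zCent b), self_mem_zCent b⟩) hb
  tfae_have 4 → 1
  | h4, x, y, hx, hy, hle => by
    have := h4 x y hx hy (zCent_anti hle)
    have hx' : x ∈ zCent y := this ▸ self_mem_zCent x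
    exact le_antisymm hle (mem_zCent.1 hx')
  tfae_finish
end
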